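/- Under the assumptions that W_m ⊂ cl(Range T), Range(Q_m T_h) = W_m, ‖Q_m(T − T_h)‖ ≤ h, and ‖Q_m(y − y^δ)‖ ≤ δ, the fully discretized iterated Tikhonov approximation x_{α,m,i}^{δ,h} := ∑_{k=1}^i α^{k-1}(T_{h,m}* T_{h,m} + αI)^{-k} T_{h,m}* y^δ with T_{h,m} := Q_m T_h satisfies ‖x† − x_{α,m,i}^{δ,h}‖ ≤ α^i ‖(T_m* T_m + αI)^{-i} x†‖ + (i(i+1) h ‖x†‖ + i δ)/(2√α), where T_m := Q_m T. -/

import Mathlib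

/-!
Put `R = Qₘ T`, `S = Qₘ Tₕ`, `d = Qₘ (y − yδ)`, `P = α (R*R + α)⁻¹`, `Pₕ = α (S*S + α)⁻¹`.
Since `Wₘ ⊆ cl(Range T)`, `S* yδ = S* (R x† − d)`, and the errors `eₙ = x† − xₙ` obey
`eₙ₊₁ = Pₕ eₙ + (S*S + α)⁻¹ S* ((S − R) x† + d)`, while the exact-data errors are `Pⁿ x†`.
With the resolvent identity `Pₕ − P = (S*S + α)⁻¹ (S* (R − S) + (R − S)* R) P`, the distance
`‖eₙ − Pⁿ x†‖` grows in step `n` by at most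
`(h ‖Pⁿ⁺¹ x† − x†‖ + h ‖x†‖ + δ) / (2√α) ≤ ((n + 2) h ‖x†‖ + δ) / (2√α)`,
and these increments add up to at most `(i (i + 1) h ‖x†‖ + i δ) / (2√α)`. The operator
estimates used are `‖αB‖ ≤ 1`, `‖I − αB‖ ≤ 1` and `‖SB‖, ‖BS*‖ ≤ 1/(2√α)` for
`B = (S*S + α)⁻¹`, all read off from `‖S B x‖² + α ‖B x‖² = ⟪x, B x⟫`.
-/

open ContinuousLinearMap RealInnerProductSpace

section

variable {𝕜 E : Type*} [NormedField 𝕜] [SeminormedAddCommGroup E] [NormedSpace 𝕜 E]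
  {P : E →L[𝕜] E}

lemma norm_pow_apply_le_of_forall_norm_apply_le (hP : ∀ v, ‖P v‖ ≤ ‖v‖) (n : ℕ) (v : E) :
    ‖(P ^ n) v‖ ≤ ‖v‖ := by
  induction n with
  | zero => simp
  | succ n ih => rw [pow_succ', mul_apply_eq_comp]; exact (hP _).trans ih

lemma norm_pow_apply_sub_le_of_forall_norm_apply_le (hP : ∀ v, ‖P v‖ ≤ ‖v‖)
    (hP' : ∀ v, ‖P v - v‖ ≤ ‖v‖) (n : ℕ) (v : E) : ‖(P ^ n) v - v‖ ≤ n * ‖v‖ := by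
  induction n with
  | zero => simp
  | succ n ih =>
    calc ‖(P ^ (n + 1)) v - v‖ = ‖P ((P ^ n) v - v) + (P v - v)‖ := by
          rw [pow_succ', mul_apply_eq_comp, map_sub]; abel_nf
      _ ≤ n * ‖v‖ + ‖v‖ := norm_add_le_of_le ((hP _).trans ih) (hP' v)
      _ = (n + 1 : ℕ) * ‖v‖ := by push_cast; ring

/-- `∑_{k=1}^{n} α^{k-1} B^k w`: with `B = (S*S + αI)⁻¹` and `w = S* y` this is the `n`-th
iterated Tikhonov approximation. -/
def iteratedTikhonov (B : E →L[𝕜] E) (α : 𝕜) (n : ℕ) (w : E) : E :=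
  ∑ k ∈ Finset.range n, α ^ k • (B ^ (k + 1)) w

lemma iteratedTikhonov_succ (B : E →L[𝕜] E) (α : 𝕜) (n : ℕ) (w : E) :
    iteratedTikhonov B α (n + 1) w = B w + α • B (iteratedTikhonov B α n w) := by
  rw [iteratedTikhonov, iteratedTikhonov, Finset.sum_range_succ', map_sum, Finset.smul_sum,
    add_comm]
  congr 1
  · simp
  · refine Finset.sum_congr rfl fun k _ => ?_
    rw [map_smul, smul_smul, ← pow_succ', pow_succ' B (k + 1), mul_apply_eq_comp]

lemma sub_iteratedTikhonov_succ {A B : E →L[𝕜] E} {α : 𝕜} (hB : B * (A + α • 1) = 1) (n : ℕ)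
    (x w : E) :
    x - iteratedTikhonov B α (n + 1) w = α • B (x - iteratedTikhonov B α n w) + B (A x - w) := by
  have hx : B (A x) + α • B x = x := by simpa using congr($hB x)
  rw [iteratedTikhonov_succ]
  simp only [map_sub, smul_sub]
  linear_combination (norm := module) -hx

end

lemma two_mul_le_of_sq_add_sq_le_mul {a b c : ℝ} (hc : 0 ≤ c) (h : a ^ 2 + b ^ 2 ≤ c * b) :
    2 * a ≤ c :=
  le_of_sq_le_sq (by nlinarith [sq_nonneg (2 * b - c)]) hc

lemma sub_eq_mul_sub_mul_of_mul_eq_one {R : Type*} [Ring R] {a b c d : R}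
    (hac : a * c = 1) (hdb : d * b = 1) : a - b = a * (d - c) * b := by
  rw [mul_sub, sub_mul, mul_assoc, hdb, mul_one, hac, one_mul]

section

variable {X Y : Type*} [NormedAddCommGroup X] [InnerProductSpace ℝ X] [CompleteSpace X]
  [NormedAddCommGroup Y] [InnerProductSpace ℝ Y] [CompleteSpace Y]

lemma adjoint_comp_self_sub_adjoint_comp_self (R S : X →L[ℝ] Y) :
    adjoint R ∘L R - adjoint S ∘L S = adjoint S ∘L (R - S) + adjoint (R - S) ∘L R := by
  rw [map_sub, comp_sub, sub_comp]; abel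

lemma adjoint_starProjection_comp_apply_starProjection (K : Submodule ℝ Y)
    [K.HasOrthogonalProjection] (A : X →L[ℝ] Y) (z : Y) :
    adjoint (K.starProjection ∘L A) (K.starProjection z) = adjoint (K.starProjection ∘L A) z := by
  rw [adjoint_comp, (isSelfAdjoint_starProjection K).adjoint_eq, comp_apply, comp_apply,
    ← mul_apply_eq_comp, K.isIdempotentElem_starProjection.eq]

section Tikhonov

variable {S : X →L[ℝ] Y} {α : ℝ} {B : X →L[ℝ] X}

lemma norm_sq_add_mul_norm_sq_eq_inner {v w : X} (h : adjoint S (S v) + α • v = w) :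
    ‖S v‖ ^ 2 + α * ‖v‖ ^ 2 = ⟪w, v⟫ := by
  rw [← h, inner_add_left, real_inner_smul_left, adjoint_inner_left,
    real_inner_self_eq_norm_sq, real_inner_self_eq_norm_sq]

lemma adjoint_apply_apply_add_smul_of_mul_eq_one (hB : (adjoint S ∘L S + α • 1) * B = 1)
    (x : X) : adjoint S (S (B x)) + α • B x = x := by
  simpa using congr($hB x)

variable (hα : 0 ≤ α) (hB : (adjoint S ∘L S + α • 1) * B = 1)
include hα hB

lemma sq_add_sq_le_of_tikhonov (x : X) :
    (√α * ‖S (B x)‖) ^ 2 + ‖α • B x‖ ^ 2 ≤ ‖x‖ * ‖α • B x‖ := by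
  have key := norm_sq_add_mul_norm_sq_eq_inner (adjoint_apply_apply_add_smul_of_mul_eq_one hB x)
  have := real_inner_le_norm x (B x)
  rw [norm_smul, Real.norm_of_nonneg hα, mul_pow, Real.sq_sqrt hα]
  nlinarith

lemma norm_smul_apply_le_of_tikhonov (x : X) : ‖α • B x‖ ≤ ‖x‖ := by
  have := sq_add_sq_le_of_tikhonov hα hB x
  nlinarith [norm_nonneg (α • B x), norm_nonneg x, sq_nonneg (√α * ‖S (B x)‖)]

lemma two_mul_sqrt_mul_norm_apply_le_of_tikhonov (x : X) :
    2 * √α * ‖S (B x)‖ ≤ ‖x‖ := by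
  rw [mul_assoc]
  exact two_mul_le_of_sq_add_sq_le_mul (norm_nonneg x) (sq_add_sq_le_of_tikhonov hα hB x)

lemma two_mul_sqrt_mul_norm_apply_adjoint_le_of_tikhonov (z : Y) :
    2 * √α * ‖B (adjoint S z)‖ ≤ ‖z‖ := by
  have key := norm_sq_add_mul_norm_sq_eq_inner
    (adjoint_apply_apply_add_smul_of_mul_eq_one hB (adjoint S z))
  rw [adjoint_inner_left] at key
  have := real_inner_le_norm z (S (B (adjoint S z)))
  rw [mul_assoc]
  refine two_mul_le_of_sq_add_sq_le_mul (b := ‖S (B (adjoint S z))‖) (norm_nonneg z) ?_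
  rw [mul_pow, Real.sq_sqrt hα]
  linarith

lemma norm_smul_apply_sub_le_of_tikhonov (x : X) : ‖α • B x - x‖ ≤ ‖x‖ := by
  have hx := adjoint_apply_apply_add_smul_of_mul_eq_one hB x
  set v := B x
  have hinner : 0 ≤ ⟪adjoint S (S v), α • v⟫ := by
    rw [real_inner_smul_right, adjoint_inner_left, real_inner_self_eq_norm_sq]
    positivity
  have hsq : ‖adjoint S (S v)‖ ^ 2 ≤ ‖x‖ ^ 2 := by
    rw [← hx, norm_add_sq_real]
    nlinarith [sq_nonneg ‖α • v‖]
  calc ‖α • v - x‖ = ‖adjoint S (S v)‖ := by rw [← hx, sub_add_cancel_right, norm_neg]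
    _ ≤ ‖x‖ := le_of_sq_le_sq hsq (norm_nonneg x)

end Tikhonov

section Perturbation

variable {R S : X →L[ℝ] Y} {α : ℝ} {Bm Bh : X →L[ℝ] X}

lemma smul_apply_add_apply_sub_smul_eq (hBm : (adjoint R ∘L R + α • 1) * Bm = 1)
    (hBh : Bh * (adjoint S ∘L S + α • 1) = 1) (x e u : X) (d : Y) :
    α • Bh e + Bh (adjoint S (S x) - adjoint S (R x - d)) - α • Bm u =
      α • Bh (e - u) + Bh (adjoint S ((R - S) (α • Bm u - x) + d)) +
        Bh (adjoint (R - S) (R (α • Bm u))) := by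
  have hres := sub_eq_mul_sub_mul_of_mul_eq_one hBh hBm
  rw [add_sub_add_right_eq_sub, adjoint_comp_self_sub_adjoint_comp_self] at hres
  have hu := congr($hres u)
  simp only [sub_apply, mul_apply_eq_comp, add_apply, comp_apply] at hu
  simp only [map_add, map_sub, map_smul, sub_apply] at hu ⊢
  linear_combination (norm := module) α • hu

lemma norm_smul_apply_add_apply_le (hα : 0 < α) {h : ℝ} (hRS : ‖R - S‖ ≤ h)
    (hBm : (adjoint R ∘L R + α • 1) * Bm = 1) (hBh : (adjoint S ∘L S + α • 1) * Bh = 1)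
    (x e u : X) (d : Y) :
    ‖α • Bh (e - u) + Bh (adjoint S ((R - S) (α • Bm u - x) + d)) +
        Bh (adjoint (R - S) (R (α • Bm u)))‖ ≤
      ‖e - u‖ + (h * ‖α • Bm u - x‖ + ‖d‖ + h * ‖u‖) / (2 * √α) := by
  have hc : 0 < 2 * √α := by positivity
  have hRS' : ‖adjoint (R - S)‖ ≤ h := by rwa [LinearIsometryEquiv.norm_map]
  have hfirst : ‖α • Bh (e - u)‖ ≤ ‖e - u‖ := norm_smul_apply_le_of_tikhonov hα.le hBh _
  have hsecond : ‖Bh (adjoint S ((R - S) (α • Bm u - x) + d))‖ ≤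
      (h * ‖α • Bm u - x‖ + ‖d‖) / (2 * √α) := by
    rw [le_div_iff₀' hc]
    refine (two_mul_sqrt_mul_norm_apply_adjoint_le_of_tikhonov hα.le hBh _).trans ?_
    exact (norm_add_le _ _).trans (add_le_add ((R - S).le_of_opNorm_le hRS _) le_rfl)
  have hthird : ‖Bh (adjoint (R - S) (R (α • Bm u)))‖ ≤ h * ‖u‖ / (2 * √α) := by
    rw [map_smul, map_smul, map_smul]
    refine (norm_smul_apply_le_of_tikhonov hα.le hBh _).trans ?_
    refine ((adjoint (R - S)).le_of_opNorm_le hRS' _).trans ?_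
    rw [le_div_iff₀' hc, mul_left_comm]
    exact mul_le_mul_of_nonneg_left
      (two_mul_sqrt_mul_norm_apply_le_of_tikhonov hα.le hBm u) ((norm_nonneg _).trans hRS)
  calc _ ≤ ‖α • Bh (e - u)‖ + ‖Bh (adjoint S ((R - S) (α • Bm u - x) + d))‖ +
        ‖Bh (adjoint (R - S) (R (α • Bm u)))‖ := norm_add₃_le
    _ ≤ _ := by rw [add_div]; linarith

theorem norm_sub_iteratedTikhonov_sub_le (hα : 0 < α) {h δ : ℝ} (hRS : ‖R - S‖ ≤ h)
    {d : Y} (hd : ‖d‖ ≤ δ) (hBm : (adjoint R ∘L R + α • 1) * Bm = 1)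
    (hBh₁ : Bh * (adjoint S ∘L S + α • 1) = 1) (hBh₂ : (adjoint S ∘L S + α • 1) * Bh = 1)
    (x : X) (n : ℕ) :
    ‖x - iteratedTikhonov Bh α n (adjoint S (R x - d)) - ((α • Bm) ^ n) x‖ ≤
      (n * (n + 1) * h * ‖x‖ + n * δ) / (2 * √α) := by
  have hP : ∀ v, ‖(α • Bm) v‖ ≤ ‖v‖ := norm_smul_apply_le_of_tikhonov hα.le hBm
  have hP' : ∀ v, ‖(α • Bm) v - v‖ ≤ ‖v‖ := norm_smul_apply_sub_le_of_tikhonov hα.le hBm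
  have hh : 0 ≤ h := (norm_nonneg _).trans hRS
  induction n with
  | zero => simp [iteratedTikhonov]
  | succ n ih =>
    set u := ((α • Bm) ^ n) x
    have hu : ‖u‖ ≤ ‖x‖ := norm_pow_apply_le_of_forall_norm_apply_le hP n x
    have hPu : ((α • Bm) ^ (n + 1)) x = α • Bm u := by
      rw [pow_succ', mul_apply_eq_comp, smul_apply]
    have hu' : ‖α • Bm u - x‖ ≤ (n + 1 : ℕ) * ‖x‖ :=
      hPu ▸ norm_pow_apply_sub_le_of_forall_norm_apply_le hP hP' (n + 1) x
    rw [sub_iteratedTikhonov_succ hBh₁, hPu, comp_apply,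
      smul_apply_add_apply_sub_smul_eq hBm hBh₁]
    refine (norm_smul_apply_add_apply_le hα hRS hBm hBh₂ x _ u d).trans ?_
    have hstep : h * ‖α • Bm u - x‖ + ‖d‖ + h * ‖u‖ ≤ (n + 2) * h * ‖x‖ + δ := by
      push_cast at hu'
      nlinarith [mul_le_mul_of_nonneg_left hu' hh, mul_le_mul_of_nonneg_left hu hh]
    calc _ ≤ (n * (n + 1) * h * ‖x‖ + n * δ) / (2 * √α) + ((n + 2) * h * ‖x‖ + δ) / (2 * √α) :=
          add_le_add ih (by gcongr)
      _ ≤ _ := by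
        rw [← add_div]
        refine div_le_div_of_nonneg_right ?_ (by positivity)
        push_cast
        nlinarith [mul_nonneg hh (norm_nonneg x)]

end Perturbation

end

open ContinuousLinearMap in
theorem iterated_tikhonov_total_error_bound_general
    {X Y : Type*} [NormedAddCommGroup X] [InnerProductSpace ℝ X] [CompleteSpace X]
    [NormedAddCommGroup Y] [InnerProductSpace ℝ Y] [CompleteSpace Y]
    (T Th : X →L[ℝ] Y) (α : ℝ) (hα : 0 < α) (i : ℕ)
    (h δ : ℝ) (y yδ : Y) (xdag : X)
    (W : Submodule ℝ Y) [FiniteDimensional ℝ W]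
    (Qm Q : Y →L[ℝ] Y)
    (hQm : Qm = W.subtypeL ∘L W.orthogonalProjectionOnto)
    (hQ : Q = (LinearMap.range (T : X →ₗ[ℝ] Y)).topologicalClosure.subtypeL ∘L
      (LinearMap.range (T : X →ₗ[ℝ] Y)).topologicalClosure.orthogonalProjectionOnto)
    (hW : W ≤ (LinearMap.range (T : X →ₗ[ℝ] Y)).topologicalClosure)
    (hTh : ‖Qm ∘L (T - Th)‖ ≤ h)
    (hyδ : ‖Qm (y - yδ)‖ ≤ δ)
    (hxdag : T xdag = Q y)
    (Bm Bhm : X →L[ℝ] X)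
    (hBm₂ : (adjoint (Qm ∘L T) ∘L (Qm ∘L T) + α • 1) * Bm = 1)
    (hBhm₁ : Bhm * (adjoint (Qm ∘L Th) ∘L (Qm ∘L Th) + α • 1) = 1)
    (hBhm₂ : (adjoint (Qm ∘L Th) ∘L (Qm ∘L Th) + α • 1) * Bhm = 1) :
    ‖xdag - ∑ k ∈ Finset.range i, α ^ k • (Bhm ^ (k + 1)) (adjoint (Qm ∘L Th) yδ)‖ ≤
      α ^ i * ‖(Bm ^ i) xdag‖ +
        ((i : ℝ) * (i + 1) * h * ‖xdag‖ + (i : ℝ) * δ) / (2 * Real.sqrt α) := by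
  have hQmQ : Qm ∘L Q = Qm := hQm ▸ hQ ▸ Submodule.starProjection_comp_starProjection_of_le hW
  have hdata : adjoint (Qm ∘L Th) yδ = adjoint (Qm ∘L Th) ((Qm ∘L T) xdag - Qm (y - yδ)) := by
    rw [comp_apply, hxdag, ← comp_apply Qm Q, hQmQ, ← map_sub, sub_sub_cancel, hQm]
    exact (adjoint_starProjection_comp_apply_starProjection W Th yδ).symm
  have hexact : ‖((α • Bm) ^ i) xdag‖ = α ^ i * ‖(Bm ^ i) xdag‖ := by
    rw [smul_pow, smul_apply, norm_smul, Real.norm_of_nonneg (pow_nonneg hα.le i)]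
  have hperturb := norm_sub_iteratedTikhonov_sub_le hα (comp_sub Qm T Th ▸ hTh) hyδ hBm₂
    hBhm₁ hBhm₂ xdag i
  rw [← hdata] at hperturb
  calc _ ≤ ‖((α • Bm) ^ i) xdag‖ +
        ‖xdag - iteratedTikhonov Bhm α i (adjoint (Qm ∘L Th) yδ) - ((α • Bm) ^ i) xdag‖ :=
        norm_le_norm_add_norm_sub' _ _
    _ ≤ _ := by rw [hexact]; exact add_le_add le_rfl hperturb

open ContinuousLinearMap in
/-- Lemma A.2 of the paper: under Assumptions A.1
(`Wₘ ⊆ cl(Range T)`, `Range(Qₘ Tₕ) = Wₘ`, `‖Qₘ(T − Tₕ)‖ ≤ h`, `‖Qₘ(y − yδ)‖ ≤ δ`),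
the fully discretized iterated Tikhonov approximation built from `T_{h,m} := Qₘ Tₕ` and
data `yδ` satisfies
`‖x† − x_{α,m,i}^{δ,h}‖ ≤ αⁱ ‖(Tₘ*Tₘ + αI)⁻ⁱ x†‖ + (i(i+1) h ‖x†‖ + i δ)/(2√α)`,
where `Tₘ := Qₘ T`. -/
theorem iterated_tikhonov_total_error_bound
    {X Y : Type*} [NormedAddCommGroup X] [InnerProductSpace ℝ X] [CompleteSpace X]
    [NormedAddCommGroup Y] [InnerProductSpace ℝ Y] [CompleteSpace Y]
    (T Th : X →L[ℝ] Y) (α : ℝ) (hα : 0 < α) (i : ℕ) (hi : 1 ≤ i)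
    (h δ : ℝ) (hh0 : 0 ≤ h) (hδ0 : 0 ≤ δ) (y yδ : Y) (xdag : X)
    (W : Submodule ℝ Y) [FiniteDimensional ℝ W]
    (Qm Q : Y →L[ℝ] Y)
    (hQm : Qm = W.subtypeL ∘L W.orthogonalProjectionOnto)
    (hQ : Q = (LinearMap.range (T : X →ₗ[ℝ] Y)).topologicalClosure.subtypeL ∘L
      (LinearMap.range (T : X →ₗ[ℝ] Y)).topologicalClosure.orthogonalProjectionOnto)
    (hW : W ≤ (LinearMap.range (T : X →ₗ[ℝ] Y)).topologicalClosure)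
    (hrange : LinearMap.range ((Qm ∘L Th : X →L[ℝ] Y) : X →ₗ[ℝ] Y) = W)
    (hTh : ‖Qm ∘L (T - Th)‖ ≤ h)
    (hyδ : ‖Qm (y - yδ)‖ ≤ δ)
    (hxdag : T xdag = Q y)
    (Bm Bhm : X →L[ℝ] X)
    (hBm₁ : Bm * (adjoint (Qm ∘L T) ∘L (Qm ∘L T) + α • 1) = 1)
    (hBm₂ : (adjoint (Qm ∘L T) ∘L (Qm ∘L T) + α • 1) * Bm = 1)
    (hBhm₁ : Bhm * (adjoint (Qm ∘L Th) ∘L (Qm ∘L Th) + α • 1) = 1)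
    (hBhm₂ : (adjoint (Qm ∘L Th) ∘L (Qm ∘L Th) + α • 1) * Bhm = 1) :
    ‖xdag - ∑ k ∈ Finset.range i, α ^ k • (Bhm ^ (k + 1)) (adjoint (Qm ∘L Th) yδ)‖ ≤
      α ^ i * ‖(Bm ^ i) xdag‖ +
        ((i : ℝ) * (i + 1) * h * ‖xdag‖ + (i : ℝ) * δ) / (2 * Real.sqrt α) :=
  iterated_tikhonov_total_error_bound_general T Th α hα i h δ y yδ xdag W Qm Q hQm hQ hW hTh hyδ
    hxdag Bm Bhm hBm₂ hBhm₁ hBhm₂
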